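/- Let f : (Fin n → Bool) → Bool be a Boolean decision function and x : Fin n → Bool a data instance with f x = true. Then a set S ⊆ Fin n is a counterfactual explanation of x with respect to f (i.e. f (flip x S) = false and no proper subset T ⊊ S satisfies f (flip x T) = false) if and only if S is an MCS of Σ_{¬f} ∧ Σ_x over the soft clauses Σ_x, i.e. S is minimal such that there exists μ with f μ = false and μ i = x i for all i ∉ S. -/
import Mathlib


/-- `cfFlip x S` is the instance equal to `x` outside `S` and with the Boolean
value negated at every index in `S`. -/
def cfFlip {n : ℕ} (x : Fin n → Bool) (S : Finset (Fin n)) : Fin n → Bool :=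
  fun i => if i ∈ S then !(x i) else x i

/-- Any `μ` agreeing with `x` outside `T` equals `cfFlip x D` for the
difference set `D ⊆ T`. -/
lemma mu_eq_flip {n : ℕ} (x μ : Fin n → Bool) (T : Finset (Fin n))
    (h : ∀ i ∉ T, μ i = x i) :
    ∃ D ⊆ T, μ = cfFlip x D := by
  refine ⟨Finset.univ.filter (fun i => μ i ≠ x i), ?_, ?_⟩
  · intro i hi
    simp only [Finset.mem_filter] at hi
    by_contra hiT
    exact hi.2 (h i hiT)
  · funext i
    simp only [cfFlip, Finset.mem_filter, Finset.mem_univ, true_and]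
    by_cases hne : μ i = x i
    · simp [hne]
    · rw [if_pos hne]
      cases hxi : x i <;> cases hmi : μ i <;> simp_all

/-- For a positively predicted instance (`f x = true`), `S` is a
counterfactual explanation of `x` iff `S` is an MCS of `Σ_{¬f} ∧ Σ_x` over the
soft clauses `Σ_x`. -/
theorem counterfactual_pos_iff_mcs_neg (n : ℕ) (f : (Fin n → Bool) → Bool)
    (x : Fin n → Bool) (hx : f x = true) (S : Finset (Fin n)) :
    (f (cfFlip x S) = false ∧ ∀ T ⊂ S, ¬ f (cfFlip x T) = false) ↔
      ((∃ μ : Fin n → Bool, f μ = false ∧ ∀ i ∉ S, μ i = x i) ∧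
        ∀ T ⊂ S, ¬ ∃ μ : Fin n → Bool, f μ = false ∧ ∀ i ∉ T, μ i = x i) := by
  constructor
  · rintro ⟨hS, hmin⟩
    refine ⟨⟨cfFlip x S, hS, fun i hi => by simp [cfFlip, hi]⟩, ?_⟩
    rintro T hT ⟨μ, hμ, hag⟩
    obtain ⟨D, hDT, rfl⟩ := mu_eq_flip x μ T hag
    exact hmin D (lt_of_le_of_lt hDT hT) hμ
  · rintro ⟨⟨μ, hμ, hag⟩, hmin⟩
    obtain ⟨D, hDS, rfl⟩ := mu_eq_flip x μ S hag
    have hDeq : D = S := by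
      by_contra hne
      exact hmin D (lt_of_le_of_ne hDS hne) ⟨cfFlip x D, hμ, fun i hi => by
        simp [cfFlip, hi]⟩
    refine ⟨hDeq ▸ hμ, fun T hT hTf => ?_⟩
    exact hmin T hT ⟨cfFlip x T, hTf, fun i hi => by
      simp [cfFlip, hi]⟩
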